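/- arXiv:0706.0952 — 6 statements merged into one kernel-verified Lean document; each statement's English description precedes it below -/
import Mathlib

section
/- Let G be a group, V a finite-dimensional semisimple complex representation of G, and μ: G → ℂ× a character. If B and B' are two nondegenerate alternating bilinear forms on V, each satisfying B(gv,gw) = μ(g)B(v,w) (resp. for B'), then there exists T ∈ GL(V) commuting with the G-action such that B'(v,w) = B(Tv, Tw) for all v,w. -/
/-!
Let `S` be the endomorphism with `B' v w = B (S v) w`. It is invertible because `B'` is
nondegenerate, commutes with `G` because both forms scale by the same character `μ`, and is
`B`-self-adjoint because both forms are alternating. Over `ℂ` every invertible endomorphism has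
a square root `T` that is a polynomial in it: a Lagrange interpolant of `√` on the eigenvalues is
a square root up to a nilpotent error, which Newton iteration removes. Being a polynomial in `S`,
`T` still commutes with `G` and is `B`-self-adjoint, so `B (T v) (T w) = B v (S w) = B' v w`.
-/

open Polynomial

namespace Polynomial

variable {K : Type*} [Field K] [IsAlgClosed K]

theorem dvd_of_squarefree_of_forall_isRoot {p q : K[X]} (hp : Squarefree p)
    (h : ∀ a ∈ p.roots, q.IsRoot a) : p ∣ q := by
  rcases eq_or_ne q 0 with rfl | hq
  · exact dvd_zero p
  rw [IsAlgClosed.dvd_iff_roots_le_roots hp.ne_zero hq,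
    Multiset.le_iff_subset (nodup_roots (PerfectField.separable_iff_squarefree.mpr hp))]
  exact fun a ha ↦ (mem_roots hq).mpr (h a ha)

theorem exists_dvd_pow_mul_self_sub_X {p : K[X]} (hp : p ≠ 0) :
    ∃ (r : K[X]) (k : ℕ), p ∣ (r * r - X) ^ k := by
  classical
  obtain ⟨g, k, hg, -, hpg⟩ := exists_squarefree_dvd_pow_of_ne_zero hp
  choose sqrt hsqrt using fun z : K ↦ IsAlgClosed.exists_pow_nat_eq z two_pos
  set r := Lagrange.interpolate g.roots.toFinset id sqrt
  refine ⟨r, k, hpg.trans (pow_dvd_pow_of_dvd (dvd_of_squarefree_of_forall_isRoot hg ?_) k)⟩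
  intro a ha
  have hra : r.eval a = sqrt a :=
    Lagrange.eval_interpolate_at_node sqrt (Set.injOn_id _) (Multiset.mem_toFinset.mpr ha)
  simp [hra, ← sq, hsqrt]

end Polynomial

theorem exists_mul_self_eq_of_isNilpotent_mul_self_sub {R : Type*} [CommRing R]
    (h2 : IsUnit (2 : R)) {a x : R} (ha : IsUnit a) (hnil : IsNilpotent (x * x - a)) :
    ∃ b, b * b = a := by
  have hxx : IsUnit (x * x) := by
    simpa only [add_sub_cancel] using hnil.isUnit_add_left_of_commute ha (Commute.all _ _)
  obtain ⟨b, -, hb⟩ := (existsUnique_nilpotent_sub_and_aeval_eq_zero (P := X * X - C a) (x := x)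
    (by simpa using hnil) (by simpa [two_mul] using h2.mul (isUnit_of_mul_isUnit_left hxx))).exists
  exact ⟨b, by simpa [sub_eq_zero] using hb⟩

theorem Subalgebra.isUnit_of_isUnit_val {K A : Type*} [Field K] [Ring A] [Algebra K A]
    [FiniteDimensional K A] {S : Subalgebra K A} {x : S} (hx : IsUnit (x : A)) : IsUnit x :=
  IsArtinianRing.isUnit_of_isIntegral_of_nonZeroDivisor (IsIntegral.of_finite K x)
    (comap_nonZeroDivisors_le_of_injective (f := S.val) Subtype.val_injective
      hx.mem_nonZeroDivisors)

theorem exists_mem_adjoin_mul_self_eq {K A : Type*} [Field K] [IsAlgClosed K] [Ring A]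
    [Algebra K A] [FiniteDimensional K A] (h2 : (2 : K) ≠ 0) {a : A} (ha : IsUnit a) :
    ∃ b ∈ Algebra.adjoin K {a}, b * b = a := by
  let a' : Algebra.adjoin K {a} := ⟨a, Algebra.self_mem_adjoin_singleton K a⟩
  obtain ⟨r, k, hr⟩ :=
    exists_dvd_pow_mul_self_sub_X (minpoly.ne_zero (IsIntegral.of_finite K a))
  have hnil : IsNilpotent (aeval a' r * aeval a' r - a') := ⟨k, Subtype.ext <| by
    simpa [a', Subalgebra.coe_pow] using minpoly.dvd_iff.mp hr⟩
  have h2' : IsUnit (2 : Algebra.adjoin K {a}) := by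
    simpa only [map_ofNat] using (isUnit_iff_ne_zero.mpr h2).map (algebraMap K _)
  obtain ⟨b, hb⟩ := exists_mul_self_eq_of_isNilpotent_mul_self_sub h2'
    (Subalgebra.isUnit_of_isUnit_val ha) hnil
  exact ⟨b, b.2, congrArg Subtype.val hb⟩

theorem LinearMap.isAdjointPair_self_of_mem_adjoin_singleton {R M N : Type*} [CommRing R]
    [AddCommGroup M] [Module R M] [AddCommGroup N] [Module R N] {B : M →ₗ[R] M →ₗ[R] N}
    {f g : Module.End R M} (hf : IsAdjointPair B B f f) (hg : g ∈ Algebra.adjoin R {f}) :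
    IsAdjointPair B B g g := by
  induction hg using Algebra.adjoin_induction with
  | mem x hx => rwa [Set.mem_singleton_iff.mp hx]
  | algebraMap r => exact (isAdjointPair_one (B := B)).smul r
  | add x y _ _ hx hy => exact hx.add hy
  | mul x y hxS hyS hx hy =>
    have hxy : Commute x y := Algebra.commute_of_mem_adjoin_singleton_of_commute hyS
      (Algebra.commute_of_mem_adjoin_self hxS).symm
    simpa only [hxy.eq] using hx.mul hy

namespace LinearMap.BilinForm

variable {K V : Type*} [Field K] [AddCommGroup V] [Module K V] [FiniteDimensional K V]
  {B B' : LinearMap.BilinForm K V} (hB : B.Nondegenerate)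

theorem isUnit_symmCompOfNondegenerate (hB' : B'.Nondegenerate) :
    IsUnit (B'.symmCompOfNondegenerate B hB) := by
  have hinj : Function.Injective (B'.symmCompOfNondegenerate B hB) :=
    (injective_iff_map_eq_zero _).mpr fun v hv ↦ hB'.1 v fun w ↦ by
      rw [← symmCompOfNondegenerate_left_apply B' hB, hv, map_zero, LinearMap.zero_apply]
  exact (Module.End.isUnit_iff _).mpr ⟨hinj, LinearMap.injective_iff_surjective.mp hinj⟩

theorem isAdjointPair_symmCompOfNondegenerate (hBalt : B.IsAlt) (hB'alt : B'.IsAlt) :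
    IsAdjointPair B B (B'.symmCompOfNondegenerate B hB) (B'.symmCompOfNondegenerate B hB) := by
  intro v w
  rw [symmCompOfNondegenerate_left_apply, ← hB'alt.neg_eq, ← hBalt.neg_eq,
    symmCompOfNondegenerate_left_apply]

theorem commute_symmCompOfNondegenerate {T : Module.End K V} (hT : Function.Surjective T) {c : K}
    (hBT : ∀ v w, B (T v) (T w) = c * B v w) (hB'T : ∀ v w, B' (T v) (T w) = c * B' v w) :
    Commute T (B'.symmCompOfNondegenerate B hB) := by
  ext v
  refine sub_eq_zero.mp (hB.1 _ fun w ↦ ?_)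
  obtain ⟨w, rfl⟩ := hT w
  simp only [Module.End.mul_apply, map_sub, LinearMap.sub_apply, hBT,
    symmCompOfNondegenerate_left_apply, hB'T, sub_self]

end LinearMap.BilinForm

theorem equivariant_symplectic_forms_conjugate_general
    {G V : Type*} [Group G] [AddCommGroup V] [Module ℂ V] [FiniteDimensional ℂ V]
    (ρ : Representation ℂ G V)
    (μ : G →* ℂˣ)
    (B B' : LinearMap.BilinForm ℂ V)
    (hBalt : ∀ v, B v v = 0) (hB'alt : ∀ v, B' v v = 0)
    (hBnd : B.Nondegenerate) (hB'nd : B'.Nondegenerate)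
    (hBeq : ∀ g v w, B (ρ g v) (ρ g w) = (μ g : ℂ) * B v w)
    (hB'eq : ∀ g v w, B' (ρ g v) (ρ g w) = (μ g : ℂ) * B' v w) :
    ∃ T : V ≃ₗ[ℂ] V, (∀ g v, T (ρ g v) = ρ g (T v)) ∧
      ∀ v w, B' v w = B (T v) (T w) := by
  open LinearMap.BilinForm in
  set S := B'.symmCompOfNondegenerate B hBnd
  have hSu : IsUnit S := isUnit_symmCompOfNondegenerate hBnd hB'nd
  have hSadj : LinearMap.IsAdjointPair B B S S :=
    isAdjointPair_symmCompOfNondegenerate hBnd hBalt hB'alt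
  obtain ⟨T, hTS, hTT⟩ := exists_mem_adjoin_mul_self_eq (K := ℂ) two_ne_zero hSu
  have hT : Function.Bijective T :=
    (Module.End.isUnit_iff T).mp (isUnit_of_mul_isUnit_left (hTT ▸ hSu))
  have hTadj := LinearMap.isAdjointPair_self_of_mem_adjoin_singleton hSadj hTS
  refine ⟨LinearEquiv.ofBijective T hT, fun g v ↦ ?_, fun v w ↦ ?_⟩
  · have hρS : Commute (ρ g) S := commute_symmCompOfNondegenerate hBnd
      (fun v ↦ ⟨ρ g⁻¹ v, ρ.self_inv_apply g v⟩) (hBeq g) (hB'eq g)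
    have hρT : Commute (ρ g) T := Algebra.commute_of_mem_adjoin_singleton_of_commute hTS hρS
    exact (LinearMap.congr_fun hρT.eq v).symm
  · calc B' v w = B (S v) w := (symmCompOfNondegenerate_left_apply B' hBnd w v).symm
      _ = B v (S w) := hSadj v w
      _ = B (T v) (T w) := by rw [← hTT]; exact (hTadj v (T w)).symm

/-- If `V` is a finite-dimensional semisimple complex representation of `G` and `B`, `B'`
are two nondegenerate alternating `(G, μ)`-equivariant bilinear forms on `V`, then there
is `T ∈ GL(V)` commuting with the `G`-action with `B'(v,w) = B(Tv, Tw)`. -/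
theorem equivariant_symplectic_forms_conjugate
    {G V : Type*} [Group G] [AddCommGroup V] [Module ℂ V] [FiniteDimensional ℂ V]
    (ρ : Representation ℂ G V)
    (hss : ∀ W : Submodule ℂ V, (∀ g : G, ∀ v ∈ W, ρ g v ∈ W) →
      ∃ U : Submodule ℂ V, (∀ g : G, ∀ v ∈ U, ρ g v ∈ U) ∧ IsCompl W U)
    (μ : G →* ℂˣ)
    (B B' : LinearMap.BilinForm ℂ V)
    (hBalt : ∀ v, B v v = 0) (hB'alt : ∀ v, B' v v = 0)
    (hBnd : B.Nondegenerate) (hB'nd : B'.Nondegenerate)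
    (hBeq : ∀ g v w, B (ρ g v) (ρ g w) = (μ g : ℂ) * B v w)
    (hB'eq : ∀ g v w, B' (ρ g v) (ρ g w) = (μ g : ℂ) * B' v w) :
    ∃ T : V ≃ₗ[ℂ] V, (∀ g v, T (ρ g v) = ρ g (T v)) ∧
      ∀ v w, B' v w = B (T v) (T w) :=
  equivariant_symplectic_forms_conjugate_general ρ μ B B' hBalt hB'alt hBnd hB'nd hBeq hB'eq
end

section
/- Let G be a group, M a finite-dimensional complex vector space, and V an irreducible finite-dimensional complex G-representation carrying a nondegenerate (G,μ)-equivariant bilinear form b of sign ε ∈ {+1,−1} (i.e. b(w,v) = ε·b(v,w)). Then the map sending a bilinear form β on M to the form (m⊗v, m'⊗v') ↦ β(m,m')·b(v,v') on M ⊗ V is a bijection between nondegenerate bilinear forms on M of sign −ε and nondegenerate (G,μ)-equivariant alternating forms on M ⊗ V, where G acts on M ⊗ V through V. -/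
/-!
By Schur's lemma every `(G, μ)`-equivariant bilinear form on the irreducible `V` is a
scalar multiple of `b`. Applied to the slices `(v, w) ↦ B (m ⊗ v) (m' ⊗ w)` of an equivariant
form `B` on `M ⊗ V`, this writes `B = β ⊗ b`, with `β m m'` the scalar of the slice at `(m, m')`.
The map `β ↦ β ⊗ b` is injective, preserves and reflects nondegeneracy, and multiplies signs:
if `b` has sign `ε`, then `β ⊗ b` has sign `δ * ε` exactly when `β` has sign `δ`. In
characteristic zero alternating means sign `-1`, which for `β ⊗ b` means sign `-ε` for `β`.
-/

open TensorProduct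

attribute [local ext] TensorProduct.ext

namespace Representation

variable {K G V : Type*} [Field K] [AddCommGroup V] [Module K V]

theorem isIrreducible_of_forall_submodule [Monoid G] (ρ : Representation K G V) [Nontrivial V]
    (h : ∀ W : Submodule K V, (∀ g, ∀ v ∈ W, ρ g v ∈ W) → W = ⊥ ∨ W = ⊤) :
    ρ.IsIrreducible where
  exists_pair_ne := ⟨⊥, ⊤, fun e => bot_ne_top (congrArg Subrepresentation.toSubmodule e)⟩
  eq_bot_or_eq_top σ := (h σ.toSubmodule fun g _ hv => σ.apply_mem_toSubmodule g hv).imp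
    (fun e => Subrepresentation.toSubmodule_injective e)
    (fun e => Subrepresentation.toSubmodule_injective e)

theorem IsIrreducible.exists_eq_smul_id_of_commute [Monoid G] {ρ : Representation K G V}
    [IsAlgClosed K] [FiniteDimensional K V] [ρ.IsIrreducible] (T : V →ₗ[K] V)
    (hT : ∀ g v, T (ρ g v) = ρ g (T v)) : ∃ t : K, T = t • LinearMap.id := by
  obtain ⟨t, ht⟩ := algebraMap_intertwiningMap_bijective_of_isAlgClosed.surjective
    (T.intertwiningMap_of_isIntertwiningMap ρ ρ hT)
  refine ⟨t, LinearMap.ext fun v => ?_⟩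
  simpa using (DFunLike.congr_fun ht v).symm

theorem IsIrreducible.exists_eq_smul_of_equivariant [Group G] {ρ : Representation K G V}
    [IsAlgClosed K] [FiniteDimensional K V] [ρ.IsIrreducible] (κ : G → K)
    {b c : LinearMap.BilinForm K V} (hb : b.Nondegenerate)
    (hbκ : ∀ g v w, b (ρ g v) (ρ g w) = κ g * b v w)
    (hcκ : ∀ g v w, c (ρ g v) (ρ g w) = κ g * c v w) : ∃ t : K, c = t • b := by
  set T : V →ₗ[K] V := (b.toDual hb).symm.toLinearMap ∘ₗ c
  have hTb : ∀ v w, b (T v) w = c v w := fun v w =>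
    LinearMap.BilinForm.apply_toDual_symm_apply (hB := hb) (c v) w
  have hT : ∀ g v, T (ρ g v) = ρ g (T v) := by
    intro g v
    refine sub_eq_zero.mp (hb.1 _ fun w => ?_)
    rw [map_sub, LinearMap.sub_apply, sub_eq_zero]
    calc b (T (ρ g v)) w = c (ρ g v) (ρ g (ρ g⁻¹ w)) := by rw [hTb, self_inv_apply]
      _ = b (ρ g (T v)) (ρ g (ρ g⁻¹ w)) := by rw [hcκ, hbκ, hTb]
      _ = b (ρ g (T v)) w := by rw [self_inv_apply]
  obtain ⟨t, ht⟩ := exists_eq_smul_id_of_commute T hT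
  refine ⟨t, LinearMap.ext₂ fun v w => ?_⟩
  rw [← hTb, ht]
  simp

end Representation

theorem TensorProduct.eq_zero_of_tmul_eq_zero {K M V : Type*} [Field K] [AddCommGroup M]
    [Module K M] [AddCommGroup V] [Module K V] {m : M} {v : V} (hv : v ≠ 0)
    (h : m ⊗ₜ[K] v = 0) : m = 0 := by
  obtain ⟨f, hf⟩ : ∃ f : Module.Dual K V, f v ≠ 0 := by
    by_contra! h0
    exact hv ((Module.forall_dual_apply_eq_zero_iff K v).mp h0)
  have := congrArg (TensorProduct.rid K M ∘ f.lTensor M) h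
  simp only [Function.comp_apply, LinearMap.lTensor_tmul, TensorProduct.rid_tmul,
    map_zero] at this
  exact (smul_eq_zero.mp this).resolve_left hf

namespace LinearMap.BilinForm

section CommSemiring

variable {R M V : Type*} [CommSemiring R] [AddCommMonoid M] [Module R M]
  [AddCommMonoid V] [Module R V]

theorem tmul_flip (β : LinearMap.BilinForm R M) (b : LinearMap.BilinForm R V) :
    (β.tmul b).flip = β.flip.tmul b.flip := by
  ext; rfl

theorem tmul_smul_left (t : R) (β : LinearMap.BilinForm R M) (b : LinearMap.BilinForm R V) :
    (t • β).tmul b = t • β.tmul b := by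
  rw [LinearMap.BilinForm.tmul, ← smul_tmul', map_smul]

theorem tmul_smul_right (t : R) (β : LinearMap.BilinForm R M) (b : LinearMap.BilinForm R V) :
    β.tmul (t • b) = t • β.tmul b := by
  rw [LinearMap.BilinForm.tmul, TensorProduct.tmul_smul, map_smul]

theorem tmul_apply_lTensor_lTensor (β : LinearMap.BilinForm R M)
    {b : LinearMap.BilinForm R V} {f : V →ₗ[R] V} {t : R}
    (hf : ∀ v w, b (f v) (f w) = t * b v w) (x y : M ⊗[R] V) :
    β.tmul b (f.lTensor M x) (f.lTensor M y) = t * β.tmul b x y := by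
  have h : (β.tmul b).compl₁₂ (f.lTensor M) (f.lTensor M) = t • β.tmul b := by
    ext m v m' w
    simp only [AlgebraTensorModule.curry_apply, restrictScalars_self, curry_apply,
      compl₁₂_apply, lTensor_tmul, tensorDistrib_tmul, hf, smul_eq_mul, smul_apply]
    ring
  exact LinearMap.congr_fun₂ h x y

end CommSemiring

section Field

variable {K M V : Type*} [Field K] [AddCommGroup M] [Module K M] [AddCommGroup V] [Module K V]

theorem tmul_left_injective {b : LinearMap.BilinForm K V} (hb : b ≠ 0) :
    Function.Injective fun β : LinearMap.BilinForm K M => β.tmul b := by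
  intro β β' h
  obtain ⟨v, w, hvw⟩ : ∃ v w, b v w ≠ 0 := by
    by_contra! h0
    exact hb (LinearMap.ext₂ h0)
  ext m m'
  have := LinearMap.congr_fun₂ h (m ⊗ₜ v) (m' ⊗ₜ w)
  simp only [tensorDistrib_tmul, smul_eq_mul] at this
  exact mul_left_cancel₀ hvw this

theorem SeparatingLeft.of_tmul [Nontrivial V] {β : LinearMap.BilinForm K M}
    {b : LinearMap.BilinForm K V} (h : (β.tmul b).SeparatingLeft) : β.SeparatingLeft := by
  intro m hm
  obtain ⟨v, hv⟩ := exists_ne (0 : V)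
  refine TensorProduct.eq_zero_of_tmul_eq_zero hv (h _ fun y => ?_)
  induction y using TensorProduct.induction_on with
  | zero => simp
  | tmul m' w => simp [hm m']
  | add x y hx hy => simp [hx, hy]

theorem Nondegenerate.of_tmul [Nontrivial V] {β : LinearMap.BilinForm K M}
    {b : LinearMap.BilinForm K V} (h : (β.tmul b).Nondegenerate) : β.Nondegenerate :=
  ⟨SeparatingLeft.of_tmul h.1,
    flip_separatingLeft.mp <| SeparatingLeft.of_tmul (β := β.flip) (b := b.flip) <| by
      rw [← tmul_flip, flip_separatingLeft]; exact h.2⟩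

theorem Nondegenerate.tmul [FiniteDimensional K M] [FiniteDimensional K V]
    {β : LinearMap.BilinForm K M} {b : LinearMap.BilinForm K V} (hβ : β.Nondegenerate)
    (hb : b.Nondegenerate) : (β.tmul b).Nondegenerate := by
  refine Nondegenerate.ofSeparatingLeft (separatingLeft_iff_ker_eq_bot.mpr ?_)
  have h : (β.tmul b : M ⊗[K] V →ₗ[K] Module.Dual K (M ⊗[K] V)) =
      ((TensorProduct.congr (β.toDual hβ) (b.toDual hb)).trans
        (TensorProduct.dualDistribEquiv K M V)).toLinearMap := by
    ext m v m' w
    simp [toDual_def, mul_comm]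
  rw [h, LinearEquiv.ker]

theorem tmul_flip_eq_smul_iff {b : LinearMap.BilinForm K V} (hb0 : b ≠ 0) {s : K}
    (hb : b.flip = s • b) (t : K) (β : LinearMap.BilinForm K M) :
    (β.tmul b).flip = (t * s) • β.tmul b ↔ β.flip = t • β := by
  have hs : s ≠ 0 := by
    rintro rfl
    exact hb0 (by simpa using congrArg LinearMap.BilinForm.flip hb)
  rw [tmul_flip, hb, tmul_smul_right, ← tmul_smul_left, ← tmul_smul_left,
    (tmul_left_injective hb0).eq_iff, mul_comm, ← smul_smul]
  exact (smul_right_injective _ hs).eq_iff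

theorem exists_tmul_eq_of_forall_compl₁₂_mk {b : LinearMap.BilinForm K V} (hb : b ≠ 0)
    (B : LinearMap.BilinForm K (M ⊗[K] V))
    (h : ∀ m m', ∃ t : K, B.compl₁₂ (TensorProduct.mk K M V m) (TensorProduct.mk K M V m') =
      t • b) :
    ∃ β : LinearMap.BilinForm K M, β.tmul b = B := by
  choose t ht using h
  obtain ⟨v, w, hvw⟩ : ∃ v w, b v w ≠ 0 := by
    by_contra! h0
    exact hb (LinearMap.ext₂ h0)
  have hB : ∀ m m' v w, B (m ⊗ₜ v) (m' ⊗ₜ w) = t m m' * b v w := fun m m' v w =>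
    LinearMap.congr_fun₂ (ht m m') v w
  refine ⟨(b v w)⁻¹ •
    B.compl₁₂ ((TensorProduct.mk K M V).flip v) ((TensorProduct.mk K M V).flip w), ?_⟩
  ext m v' m' w'
  simp only [AlgebraTensorModule.curry_apply, restrictScalars_self, curry_apply,
    tensorDistrib_tmul, smul_apply, compl₁₂_apply, LinearMap.flip_apply, mk_apply, hB,
    smul_eq_mul]
  field_simp

end Field

end LinearMap.BilinForm

/-- Let `V` be an irreducible `G`-representation with a nondegenerate `(G,μ)`-equivariant
bilinear form `b` of sign `ε`, and `M` a finite-dimensional multiplicity space. Then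
`β ↦ β ⊗ b` is a bijection between nondegenerate bilinear forms on `M` of sign `-ε` and
nondegenerate `(G,μ)`-equivariant alternating forms on `M ⊗ V` (where `G` acts through `V`). -/
theorem isotypic_summand_symplectic_forms
    {G M V : Type*} [Group G]
    [AddCommGroup M] [Module ℂ M] [FiniteDimensional ℂ M]
    [AddCommGroup V] [Module ℂ V] [FiniteDimensional ℂ V]
    (ρ : Representation ℂ G V)
    (hirr : (∃ v : V, v ≠ 0) ∧
      ∀ W : Submodule ℂ V, (∀ g : G, ∀ v ∈ W, ρ g v ∈ W) → W = ⊥ ∨ W = ⊤)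
    (μ : G →* ℂˣ)
    (b : LinearMap.BilinForm ℂ V) (ε : ℂ) (hε : ε = 1 ∨ ε = -1)
    (hsign : ∀ v w, b w v = ε * b v w)
    (hbnd : b.Nondegenerate)
    (hbeq : ∀ g v w, b (ρ g v) (ρ g w) = (μ g : ℂ) * b v w) :
    (∀ β : LinearMap.BilinForm ℂ M, β.Nondegenerate → (∀ m m', β m' m = -ε * β m m') →
      ((β.tmul b).Nondegenerate ∧ (∀ x, (β.tmul b) x x = 0) ∧
        ∀ g x y, (β.tmul b) (LinearMap.lTensor M (ρ g) x) (LinearMap.lTensor M (ρ g) y)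
          = (μ g : ℂ) * (β.tmul b) x y)) ∧
    (∀ B : LinearMap.BilinForm ℂ (M ⊗[ℂ] V), B.Nondegenerate → (∀ x, B x x = 0) →
      (∀ g x y, B (LinearMap.lTensor M (ρ g) x) (LinearMap.lTensor M (ρ g) y)
          = (μ g : ℂ) * B x y) →
      ∃! β : LinearMap.BilinForm ℂ M,
        β.Nondegenerate ∧ (∀ m m', β m' m = -ε * β m m') ∧ β.tmul b = B) := by
  obtain ⟨⟨v, hv⟩, hinv⟩ := hirr
  have : Nontrivial V := nontrivial_of_ne v 0 hv
  have : ρ.IsIrreducible := Representation.isIrreducible_of_forall_submodule ρ hinv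
  have hsign_tmul (β : LinearMap.BilinForm ℂ M) :=
    LinearMap.BilinForm.tmul_flip_eq_smul_iff hbnd.ne_zero (LinearMap.ext₂ hsign) (-ε) β
  have alt_iff (B : LinearMap.BilinForm ℂ (M ⊗[ℂ] V)) :
      (∀ x, B x x = 0) ↔ LinearMap.flip B = (-ε * ε) • B := by
    have hε2 : -ε * ε = -1 := by rcases hε with rfl | rfl <;> norm_num
    rw [hε2, neg_one_smul ℂ B, eq_comm, neg_eq_iff_eq_neg]
    exact LinearMap.isAlt_iff_eq_neg_flip
  refine ⟨fun β hβ hβs => ⟨hβ.tmul hbnd, (alt_iff _).mpr ((hsign_tmul β).mpr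
    (LinearMap.ext₂ hβs)), fun g => β.tmul_apply_lTensor_lTensor (hbeq g)⟩, ?_⟩
  intro B hB hBalt hBeq
  obtain ⟨β, rfl⟩ : ∃ β : LinearMap.BilinForm ℂ M, β.tmul b = B := by
    refine LinearMap.BilinForm.exists_tmul_eq_of_forall_compl₁₂_mk hbnd.ne_zero B
      fun m m' => ?_
    refine Representation.IsIrreducible.exists_eq_smul_of_equivariant (fun g => (μ g : ℂ))
      hbnd hbeq fun g v w => ?_
    simpa using hBeq g (m ⊗ₜ v) (m' ⊗ₜ w)
  have hβs := (hsign_tmul β).mp ((alt_iff _).mp hBalt)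
  refine ⟨β, ⟨LinearMap.BilinForm.Nondegenerate.of_tmul hB,
    fun m m' => LinearMap.congr_fun₂ hβs m m', rfl⟩, ?_⟩
  rintro β' ⟨-, -, h⟩
  exact LinearMap.BilinForm.tmul_left_injective hbnd.ne_zero h
end

section
/- Let V be a 4-dimensional complex vector space with a nondegenerate alternating bilinear form ⟨,⟩, G a group, μ: G → ℂ× a character, and φ: G → GL(V) a semisimple representation with ⟨φ(g)v, φ(g)w⟩ = μ(g)⟨v,w⟩ for all g. If φ has no nonzero G-invariant isotropic subspace, then either φ is irreducible, or V = V₁ ⊕ V₂ where V₁, V₂ are non-isomorphic irreducible 2-dimensional G-subrepresentations, each nondegenerate for ⟨,⟩, and the form restricted to each Vᵢ satisfies ⟨φ(g)v, φ(g)w⟩ = μ(g)⟨v,w⟩ with ∧²Vᵢ affording the character μ. -/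
/-!
The orthogonal complement of an invariant subspace `W` is invariant, so `W ⊓ Wᗮ` is an invariant
isotropic subspace and hence zero: `V = W ⊕ Wᗮ` and `B` is nondegenerate on every invariant
subspace. Lines are isotropic for an alternating form, so a proper invariant subspace and its
complement are both planes, and they are irreducible. On a plane the alternating forms form a line
and `T` scales them by `det T`, which gives `det = μ`. Finally, an equivariant isomorphism
`e : W ≃ Wᗮ` pulls `B` back to `a • B` on `W` with `a ≠ 0`; for `s ^ 2 = -a⁻¹` the graph of `s • e`
is then an invariant isotropic plane, which is impossible.
-/

open Module

namespace LinearMap.BilinForm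

section CommRing

variable {R M : Type*} [CommRing R] [AddCommGroup M] [Module R M] {C : LinearMap.BilinForm R M}

theorem apply_add_smul_add_smul {x x' y y' : M} (hxy' : C x y' = 0) (hyx' : C y x' = 0)
    (s : R) : C (x + s • y) (x' + s • y') = C x x' + s ^ 2 * C y y' := by
  simp only [map_add, map_smul, LinearMap.add_apply, LinearMap.smul_apply, smul_eq_mul, hxy',
    hyx']
  ring

theorem IsAlt.apply_eq_mul_apply_basis (hC : C.IsAlt) (b : Basis (Fin 2) R M) (v w : M) :
    C v w = (b.repr v 0 * b.repr w 1 - b.repr v 1 * b.repr w 0) * C (b 0) (b 1) := by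
  conv_lhs => rw [← b.sum_repr v, ← b.sum_repr w]
  simp only [Fin.sum_univ_two, map_add, map_smul, LinearMap.add_apply, LinearMap.smul_apply,
    smul_eq_mul, hC.self_eq_zero, ← hC.neg_eq (b 0) (b 1)]
  ring

theorem IsAlt.apply_basis_ne_zero (hC : C.IsAlt) (hC0 : C ≠ 0) (b : Basis (Fin 2) R M) :
    C (b 0) (b 1) ≠ 0 := fun h => hC0 <| ext fun v w => by
  rw [hC.apply_eq_mul_apply_basis b, h, mul_zero]
  rfl

theorem IsAlt.apply_map_basis_eq_det_mul (hC : C.IsAlt) (b : Basis (Fin 2) R M)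
    (T : M →ₗ[R] M) : C (T (b 0)) (T (b 1)) = LinearMap.det T * C (b 0) (b 1) := by
  rw [hC.apply_eq_mul_apply_basis b, ← LinearMap.det_toMatrix b T, Matrix.det_fin_two]
  simp only [LinearMap.toMatrix_apply]
  ring

end CommRing

variable {k M : Type*} [Field k] [AddCommGroup M] [Module k M] {C C' : LinearMap.BilinForm k M}

theorem IsAlt.exists_eq_smul_of_finrank_eq_two [FiniteDimensional k M] (h2 : finrank k M = 2)
    (hC : C.IsAlt) (hC' : C'.IsAlt) (hC0 : C ≠ 0) : ∃ a : k, C' = a • C := by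
  let b := finBasisOfFinrankEq k M h2
  refine ⟨C' (b 0) (b 1) / C (b 0) (b 1), ext fun v w => ?_⟩
  rw [smul_apply, smul_apply, smul_eq_mul, hC.apply_eq_mul_apply_basis b v w,
    hC'.apply_eq_mul_apply_basis b v w]
  field_simp [hC.apply_basis_ne_zero hC0 b]

theorem IsAlt.det_eq_of_apply_map_eq_mul [FiniteDimensional k M] (h2 : finrank k M = 2)
    (hC : C.IsAlt) (hC0 : C ≠ 0) {T : M →ₗ[k] M} {c : k}
    (hT : ∀ v w, C (T v) (T w) = c * C v w) : LinearMap.det T = c := by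
  let b := finBasisOfFinrankEq k M h2
  have h := hC.apply_map_basis_eq_det_mul b T
  rw [hT] at h
  exact (mul_right_cancel₀ (hC.apply_basis_ne_zero hC0 b) h).symm

theorem IsAlt.apply_eq_zero_of_finrank_eq_one (hC : C.IsAlt) {W : Submodule k M}
    (h1 : finrank k W = 1) {v w : M} (hv : v ∈ W) (hw : w ∈ W) : C v w = 0 := by
  obtain ⟨u, -, hu⟩ := finrank_eq_one_iff'.mp h1
  obtain ⟨a, ha⟩ := hu ⟨v, hv⟩
  obtain ⟨b, hb⟩ := hu ⟨w, hw⟩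
  have hav : a • (u : M) = v := congrArg Subtype.val ha
  have hbw : b • (u : M) = w := congrArg Subtype.val hb
  rw [← hav, ← hbw]
  simp [hC.self_eq_zero]

end LinearMap.BilinForm

theorem Submodule.injective_subtype_add_smul {k V : Type*} [Field k] [AddCommGroup V]
    [Module k V] {W₁ W₂ : Submodule k V} (h : Disjoint W₁ W₂) (e : W₁ →ₗ[k] W₂) (s : k) :
    Function.Injective (W₁.subtype + s • (W₂.subtype ∘ₗ e)) := by
  refine (injective_iff_map_eq_zero _).2 fun u hu => ?_
  change (u : V) + s • (e u : V) = 0 at hu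
  have hu₂ : (u : V) ∈ W₂ := by
    rw [eq_neg_of_add_eq_zero_left hu]
    exact neg_mem (W₂.smul_mem s (e u).2)
  exact Subtype.ext (Submodule.disjoint_def.1 h u u.2 hu₂)

namespace Representation

open LinearMap (BilinForm)

variable {k G V : Type*} [Field k] [Group G] [AddCommGroup V] [Module k V]
  (φ : Representation k G V)

def IsInvariant (W : Submodule k V) : Prop := ∀ g : G, ∀ v ∈ W, φ g v ∈ W

def NoInvariantIsotropicSubspace (B : BilinForm k V) : Prop :=
  ∀ W : Submodule k V, φ.IsInvariant W → (∀ v ∈ W, ∀ w ∈ W, B v w = 0) → W = ⊥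

variable {φ} {B : BilinForm k V} {c : G → k} {W : Submodule k V}

theorem IsInvariant.orthogonal (hφB : ∀ g v w, B (φ g v) (φ g w) = c g * B v w)
    (hW : φ.IsInvariant W) : φ.IsInvariant (B.orthogonal W) := by
  intro g v hv n hn
  change B n (φ g v) = 0
  rw [← φ.self_inv_apply g n, hφB, hv _ (hW g⁻¹ n hn), mul_zero]

theorem inf_orthogonal_eq_bot (hφ : φ.NoInvariantIsotropicSubspace B)
    (hφB : ∀ g v w, B (φ g v) (φ g w) = c g * B v w) (hW : φ.IsInvariant W) :
    W ⊓ B.orthogonal W = ⊥ :=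
  hφ _ (fun g v hv => ⟨hW g v hv.1, hW.orthogonal hφB g v hv.2⟩) fun v hv _ hw => hw.2 v hv.1

theorem eq_zero_of_mem_of_forall_apply_eq_zero (hφ : φ.NoInvariantIsotropicSubspace B)
    (hBrefl : B.IsRefl) (hφB : ∀ g v w, B (φ g v) (φ g w) = c g * B v w)
    (hW : φ.IsInvariant W) (v : V) (hv : v ∈ W) (h : ∀ w ∈ W, B v w = 0) : v = 0 := by
  have hv' : v ∈ W ⊓ B.orthogonal W := ⟨hv, fun w hw => hBrefl v w (h w hw)⟩
  rwa [inf_orthogonal_eq_bot hφ hφB hW, Submodule.mem_bot] at hv'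

theorem isCompl_orthogonal [FiniteDimensional k V] (hφ : φ.NoInvariantIsotropicSubspace B)
    (hBrefl : B.IsRefl) (hφB : ∀ g v w, B (φ g v) (φ g w) = c g * B v w)
    (hW : φ.IsInvariant W) : IsCompl W (B.orthogonal W) :=
  (B.isCompl_orthogonal_iff_disjoint hBrefl).2 <|
    disjoint_iff.2 (inf_orthogonal_eq_bot hφ hφB hW)

theorem restrict_ne_zero (hφ : φ.NoInvariantIsotropicSubspace B) (hW : φ.IsInvariant W)
    (hW0 : W ≠ ⊥) : B.restrict W ≠ 0 := fun h =>
  hW0 <| hφ W hW fun v hv w hw => LinearMap.congr_fun₂ h ⟨v, hv⟩ ⟨w, hw⟩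

theorem finrank_ne_one (hφ : φ.NoInvariantIsotropicSubspace B) (hBalt : B.IsAlt)
    (hW : φ.IsInvariant W) : finrank k W ≠ 1 := fun h1 => by
  obtain rfl := hφ W hW fun v hv w hw => hBalt.apply_eq_zero_of_finrank_eq_one h1 hv hw
  simp at h1

theorem eq_bot_or_eq_of_le_of_finrank_eq_two [FiniteDimensional k V]
    (hφ : φ.NoInvariantIsotropicSubspace B) (hBalt : B.IsAlt) (hW2 : finrank k W = 2)
    (U : Submodule k V) (hUW : U ≤ W) (hU : φ.IsInvariant U) : U = ⊥ ∨ U = W := by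
  have hle : finrank k U ≤ 2 := hW2 ▸ Submodule.finrank_mono hUW
  have hne := finrank_ne_one hφ hBalt hU
  rcases Nat.lt_or_ge (finrank k U) 1 with h0 | h2
  · exact Or.inl (Submodule.finrank_eq_zero.mp (by omega))
  · exact Or.inr (Submodule.eq_of_le_of_finrank_eq hUW (by omega))

theorem finrank_eq_two_of_ne_bot_of_ne_top [FiniteDimensional k V] (hdim : finrank k V = 4)
    (hφ : φ.NoInvariantIsotropicSubspace B) (hBalt : B.IsAlt)
    (hφB : ∀ g v w, B (φ g v) (φ g w) = c g * B v w) (hW : φ.IsInvariant W)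
    (hbot : W ≠ ⊥) (htop : W ≠ ⊤) :
    finrank k W = 2 ∧ finrank k (B.orthogonal W) = 2 := by
  have hsum := Submodule.finrank_add_eq_of_isCompl (isCompl_orthogonal hφ hBalt.isRefl hφB hW)
  have h0 : finrank k W ≠ 0 := fun h => hbot (Submodule.finrank_eq_zero.mp h)
  have hlt := Submodule.finrank_lt htop
  have h1 := finrank_ne_one hφ hBalt hW
  have h1' := finrank_ne_one hφ hBalt (hW.orthogonal hφB)
  omega

theorem det_restrict_eq [FiniteDimensional k V] (hφ : φ.NoInvariantIsotropicSubspace B)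
    (hBalt : B.IsAlt) (hφB : ∀ g v w, B (φ g v) (φ g w) = c g * B v w)
    (hW : φ.IsInvariant W) (hW2 : finrank k W = 2) (g : G) :
    LinearMap.det ((φ g).restrict (hW g)) = c g := by
  have hW0 : W ≠ ⊥ := by rintro rfl; simp at hW2
  exact LinearMap.BilinForm.IsAlt.det_eq_of_apply_map_eq_mul hW2 (fun v => hBalt v)
    (restrict_ne_zero hφ hW hW0) fun v w => hφB g v w

theorem IsInvariant.range_subtype_add_smul {W₁ W₂ : Submodule k V} (h₁ : φ.IsInvariant W₁)
    (e : W₁ →ₗ[k] W₂) (he : ∀ (g : G) (v : W₁), (e ⟨φ g v, h₁ g v v.2⟩ : V) = φ g (e v))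
    (a : k) : φ.IsInvariant (LinearMap.range (W₁.subtype + a • (W₂.subtype ∘ₗ e))) := by
  rintro g _ ⟨u, rfl⟩
  exact ⟨⟨φ g u, h₁ g u u.2⟩, by simp [he]⟩

theorem not_exists_equivariant_equiv [IsAlgClosed k] [FiniteDimensional k V]
    (hφ : φ.NoInvariantIsotropicSubspace B) (hBalt : B.IsAlt)
    (hφB : ∀ g v w, B (φ g v) (φ g w) = c g * B v w) {W₁ W₂ : Submodule k V}
    (h₁ : φ.IsInvariant W₁) (h₂ : φ.IsInvariant W₂) (h₁₂ : W₂ ≤ B.orthogonal W₁)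
    (hW₁ : finrank k W₁ = 2) :
    ¬ ∃ e : W₁ ≃ₗ[k] W₂, ∀ (g : G) (v : W₁), (e ⟨φ g v, h₁ g v v.2⟩ : V) = φ g (e v) := by
  rintro ⟨e, he⟩
  have hW₁0 : W₁ ≠ ⊥ := by rintro rfl; simp at hW₁
  have hW₂ : finrank k W₂ = 2 := e.finrank_eq ▸ hW₁
  let C' : LinearMap.BilinForm k W₁ := (B.restrict W₂).compl₁₂ e e
  have hC' : C'.IsAlt := fun v => hBalt (e v)
  obtain ⟨a, ha⟩ := LinearMap.BilinForm.IsAlt.exists_eq_smul_of_finrank_eq_two hW₁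
    (fun v => hBalt v) hC' (restrict_ne_zero hφ h₁ hW₁0)
  have hpull : ∀ u u' : W₁, B (e u) (e u') = a * B u u' := fun u u' =>
    LinearMap.congr_fun₂ ha u u'
  have ha0 : a ≠ 0 := by
    rintro rfl
    have hW₂0 := hφ W₂ h₂ fun v hv w hw => by
      simpa using hpull (e.symm ⟨v, hv⟩) (e.symm ⟨w, hw⟩)
    subst hW₂0
    simp at hW₂
  obtain ⟨s, hs⟩ := IsAlgClosed.exists_pow_nat_eq (-a⁻¹) two_pos
  let f : W₁ →ₗ[k] V := W₁.subtype + s • (W₂.subtype ∘ₗ e.toLinearMap)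
  have hf_iso : ∀ v ∈ LinearMap.range f, ∀ w ∈ LinearMap.range f, B v w = 0 := by
    rintro _ ⟨u, rfl⟩ _ ⟨u', rfl⟩
    change B (u + s • (e u : V)) (u' + s • (e u' : V)) = 0
    rw [B.apply_add_smul_add_smul (h₁₂ (e u').2 u u.2)
      (hBalt.isRefl _ _ (h₁₂ (e u).2 u' u'.2)), hpull, hs]
    field_simp
    ring
  have hdisj : Disjoint W₁ W₂ := disjoint_iff.2 <|
    eq_bot_iff.2 <| (inf_le_inf_left W₁ h₁₂).trans (inf_orthogonal_eq_bot hφ hφB h₁).le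
  have hrange :=
    LinearMap.finrank_range_of_inj (W₁.injective_subtype_add_smul hdisj e.toLinearMap s)
  rw [hφ _ (h₁.range_subtype_add_smul e.toLinearMap he s) hf_iso, finrank_bot] at hrange
  omega

end Representation

open Representation

theorem discrete_series_parameter_structure_general
    {G V : Type*} [Group G] [AddCommGroup V] [Module ℂ V] [FiniteDimensional ℂ V]
    (B : LinearMap.BilinForm ℂ V)
    (hBalt : ∀ v, B v v = 0)
    (hdim : Module.finrank ℂ V = 4)
    (φ : Representation ℂ G V) (μ : G →* ℂˣ)
    (heq : ∀ g v w, B (φ g v) (φ g w) = (μ g : ℂ) * B v w)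
    (hnoiso : ∀ W : Submodule ℂ V, (∀ g : G, ∀ v ∈ W, φ g v ∈ W) →
      (∀ v ∈ W, ∀ w ∈ W, B v w = 0) → W = ⊥) :
    (∀ W : Submodule ℂ V, (∀ g : G, ∀ v ∈ W, φ g v ∈ W) → W = ⊥ ∨ W = ⊤) ∨
    ∃ (W₁ W₂ : Submodule ℂ V) (h₁ : ∀ g : G, ∀ v ∈ W₁, φ g v ∈ W₁)
      (h₂ : ∀ g : G, ∀ v ∈ W₂, φ g v ∈ W₂),
      IsCompl W₁ W₂ ∧
      Module.finrank ℂ W₁ = 2 ∧ Module.finrank ℂ W₂ = 2 ∧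
      -- each Wᵢ is irreducible
      (∀ U : Submodule ℂ V, U ≤ W₁ → (∀ g : G, ∀ v ∈ U, φ g v ∈ U) → U = ⊥ ∨ U = W₁) ∧
      (∀ U : Submodule ℂ V, U ≤ W₂ → (∀ g : G, ∀ v ∈ U, φ g v ∈ U) → U = ⊥ ∨ U = W₂) ∧
      -- the two subrepresentations are not isomorphic
      (¬ ∃ e : W₁ ≃ₗ[ℂ] W₂, ∀ (g : G) (v : W₁),
        (e ⟨φ g v, h₁ g v v.2⟩ : V) = φ g (e v)) ∧
      -- the form is nondegenerate on each Wᵢ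
      (∀ v ∈ W₁, (∀ w ∈ W₁, B v w = 0) → v = 0) ∧
      (∀ v ∈ W₂, (∀ w ∈ W₂, B v w = 0) → v = 0) ∧
      -- restricted equivariance
      (∀ g : G, ∀ v ∈ W₁, ∀ w ∈ W₁, B (φ g v) (φ g w) = (μ g : ℂ) * B v w) ∧
      (∀ g : G, ∀ v ∈ W₂, ∀ w ∈ W₂, B (φ g v) (φ g w) = (μ g : ℂ) * B v w) ∧
      -- ∧² Wᵢ affords the character μ, i.e. the determinant of each 2-dimensional
      -- subrepresentation equals μ
      (∀ g : G, LinearMap.det ((φ g).restrict (h₁ g)) = (μ g : ℂ)) ∧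
      (∀ g : G, LinearMap.det ((φ g).restrict (h₂ g)) = (μ g : ℂ)) := by
  by_cases hirr : ∀ W : Submodule ℂ V, φ.IsInvariant W → W = ⊥ ∨ W = ⊤
  · exact Or.inl hirr
  push Not at hirr
  obtain ⟨W, hW, hbot, htop⟩ := hirr
  have hφ : φ.NoInvariantIsotropicSubspace B := hnoiso
  have halt : B.IsAlt := hBalt
  have hW' := hW.orthogonal heq
  obtain ⟨h2, h2'⟩ := finrank_eq_two_of_ne_bot_of_ne_top hdim hφ halt heq hW hbot htop
  refine Or.inr ⟨W, B.orthogonal W, hW, hW', isCompl_orthogonal hφ halt.isRefl heq hW, h2, h2',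
    eq_bot_or_eq_of_le_of_finrank_eq_two hφ halt h2,
    eq_bot_or_eq_of_le_of_finrank_eq_two hφ halt h2',
    not_exists_equivariant_equiv hφ halt heq hW hW' le_rfl h2,
    eq_zero_of_mem_of_forall_apply_eq_zero hφ halt.isRefl heq hW,
    eq_zero_of_mem_of_forall_apply_eq_zero hφ halt.isRefl heq hW',
    fun g v _ w _ => heq g v w, fun g v _ w _ => heq g v w,
    det_restrict_eq hφ halt heq hW h2, det_restrict_eq hφ halt heq hW' h2'⟩

/-- Structure of discrete series L-parameters for GSp₄: a semisimple representation on a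
4-dimensional symplectic space preserving the form up to `μ`, with no nonzero invariant
isotropic subspace, is either irreducible or the direct sum of two non-isomorphic
irreducible 2-dimensional nondegenerate subrepresentations each with determinant `μ`. -/
theorem discrete_series_parameter_structure
    {G V : Type*} [Group G] [AddCommGroup V] [Module ℂ V] [FiniteDimensional ℂ V]
    (B : LinearMap.BilinForm ℂ V)
    (hBalt : ∀ v, B v v = 0) (hBnd : B.Nondegenerate)
    (hdim : Module.finrank ℂ V = 4)
    (φ : Representation ℂ G V) (μ : G →* ℂˣ)
    (hss : ∀ W : Submodule ℂ V, (∀ g : G, ∀ v ∈ W, φ g v ∈ W) →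
      ∃ U : Submodule ℂ V, (∀ g : G, ∀ v ∈ U, φ g v ∈ U) ∧ IsCompl W U)
    (heq : ∀ g v w, B (φ g v) (φ g w) = (μ g : ℂ) * B v w)
    (hnoiso : ∀ W : Submodule ℂ V, (∀ g : G, ∀ v ∈ W, φ g v ∈ W) →
      (∀ v ∈ W, ∀ w ∈ W, B v w = 0) → W = ⊥) :
    (∀ W : Submodule ℂ V, (∀ g : G, ∀ v ∈ W, φ g v ∈ W) → W = ⊥ ∨ W = ⊤) ∨
    ∃ (W₁ W₂ : Submodule ℂ V) (h₁ : ∀ g : G, ∀ v ∈ W₁, φ g v ∈ W₁)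
      (h₂ : ∀ g : G, ∀ v ∈ W₂, φ g v ∈ W₂),
      IsCompl W₁ W₂ ∧
      Module.finrank ℂ W₁ = 2 ∧ Module.finrank ℂ W₂ = 2 ∧
      -- each Wᵢ is irreducible
      (∀ U : Submodule ℂ V, U ≤ W₁ → (∀ g : G, ∀ v ∈ U, φ g v ∈ U) → U = ⊥ ∨ U = W₁) ∧
      (∀ U : Submodule ℂ V, U ≤ W₂ → (∀ g : G, ∀ v ∈ U, φ g v ∈ U) → U = ⊥ ∨ U = W₂) ∧
      -- the two subrepresentations are not isomorphic
      (¬ ∃ e : W₁ ≃ₗ[ℂ] W₂, ∀ (g : G) (v : W₁),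
        (e ⟨φ g v, h₁ g v v.2⟩ : V) = φ g (e v)) ∧
      -- the form is nondegenerate on each Wᵢ
      (∀ v ∈ W₁, (∀ w ∈ W₁, B v w = 0) → v = 0) ∧
      (∀ v ∈ W₂, (∀ w ∈ W₂, B v w = 0) → v = 0) ∧
      -- restricted equivariance
      (∀ g : G, ∀ v ∈ W₁, ∀ w ∈ W₁, B (φ g v) (φ g w) = (μ g : ℂ) * B v w) ∧
      (∀ g : G, ∀ v ∈ W₂, ∀ w ∈ W₂, B (φ g v) (φ g w) = (μ g : ℂ) * B v w) ∧
      -- ∧² Wᵢ affords the character μ, i.e. the determinant of each 2-dimensional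
      -- subrepresentation equals μ
      (∀ g : G, LinearMap.det ((φ g).restrict (h₁ g)) = (μ g : ℂ)) ∧
      (∀ g : G, LinearMap.det ((φ g).restrict (h₂ g)) = (μ g : ℂ)) :=
  discrete_series_parameter_structure_general B hBalt hdim φ μ heq hnoiso
end

section
/- Let V be a 4-dimensional complex symplectic space with form ⟨,⟩, G a group, μ: G → ℂ× a character, and φ: G → GL(V) a semisimple representation satisfying ⟨φ(g)v, φ(g)w⟩ = μ(g)⟨v,w⟩. Suppose φ stabilizes an isotropic line L ⊆ V on which G acts by a character χ. Then φ stabilizes another line L' with ⟨L, L'⟩ ≠ 0, G acts on L' by the character χ⁻¹·μ, and the plane L ⊕ L' is a nondegenerate G-invariant 2-dimensional subrepresentation whose determinant character equals μ. -/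
/-!
Write `L = ℂ e`. Since `φ(g) e = χ(g) e` and `φ` is a similitude, `B e (φ g v) = χ(g)⁻¹ μ(g) B e v`,
so the hyperplane `ker (B e)` is invariant; a semisimple complement of it is a line `ℂ e'` with
`B e e' ≠ 0`. Comparing `B (φ g e) (φ g e') = μ(g) B e e'` gives the character `χ⁻¹ μ` on `e'`,
and since `B` is alternating, `B` restricted to `ℂ e ⊕ ℂ e'` has Gram matrix
`[[0, b], [-b, 0]]` with `b = B e e' ≠ 0`, while `φ(g)` acts on it by `diag(χ(g), χ(g)⁻¹ μ(g))`.
-/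

section

open Module Submodule
open LinearMap (BilinForm ker)

variable {K V : Type*} [Field K] [AddCommGroup V] [Module K V]

lemma Submodule.span_range_pair (x y : V) : span K (Set.range ![x, y]) = (K ∙ x) ⊔ (K ∙ y) := by
  rw [Matrix.range_cons_cons_empty, span_insert]

namespace Module.End

lemma apply_eq_smul_of_mem_span_singleton {f : End K V} {x v : V} {c : K}
    (hx : f x = c • x) (hv : v ∈ K ∙ x) : f v = c • v :=
  mem_eigenspace_iff.1 ((span_singleton_le_iff_mem _ _).2 (mem_eigenspace_iff.2 hx) hv)

lemma mapsTo_sup_span_singleton {f : End K V} {x y : V} {c d : K}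
    (hx : f x = c • x) (hy : f y = d • y) :
    ∀ v ∈ (K ∙ x) ⊔ (K ∙ y), f v ∈ (K ∙ x) ⊔ (K ∙ y) := by
  refine fun v hv => (?_ : (K ∙ x) ⊔ (K ∙ y) ≤ ((K ∙ x) ⊔ (K ∙ y)).comap f) hv
  refine sup_le ((span_singleton_le_iff_mem _ _).2 ?_) ((span_singleton_le_iff_mem _ _).2 ?_)
  · simpa [hx] using smul_mem _ c (mem_sup_left (mem_span_singleton_self x))
  · simpa [hy] using smul_mem _ d (mem_sup_right (mem_span_singleton_self y))

lemma det_eq_prod_of_apply_basis_eq_smul {ι M : Type*} [Fintype ι] [DecidableEq ι]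
    [AddCommGroup M] [Module K M] {f : End K M} (b : Basis ι K M) (d : ι → K)
    (h : ∀ i, f (b i) = d i • b i) : f.det = ∏ i, d i := by
  have : LinearMap.toMatrix b b f = Matrix.diagonal d := by
    ext i j
    by_cases hij : i = j <;> simp [LinearMap.toMatrix_apply, h, hij]
  rw [← LinearMap.det_toMatrix b, this, Matrix.det_diagonal]

lemma det_restrict_sup_span_singleton {f : End K V} {x y : V} {c d : K}
    (hli : LinearIndependent K ![x, y]) (hx : f x = c • x) (hy : f y = d • y)
    (h : ∀ v ∈ (K ∙ x) ⊔ (K ∙ y), f v ∈ (K ∙ x) ⊔ (K ∙ y)) : (f.restrict h).det = c * d := by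
  let b := (Basis.span hli).map (LinearEquiv.ofEq _ _ (span_range_pair x y))
  rw [det_eq_prod_of_apply_basis_eq_smul b ![c, d], Fin.prod_univ_two]
  · rfl
  intro i
  apply Subtype.ext
  fin_cases i <;> simp [b, Basis.span_apply, hx, hy]

end Module.End

lemma Submodule.exists_ne_zero_eq_span_singleton_of_finrank_eq_one {S : Submodule K V}
    (h : finrank K S = 1) : ∃ v ≠ 0, S = K ∙ v := by
  obtain ⟨v, hvS, hv0⟩ := exists_mem_ne_zero_of_ne_bot (isAtom_iff_finrank_eq_one.2 h).1
  exact ⟨v, hv0, eq_span_singleton_of_mem_of_finrank_eq_one h hvS hv0⟩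

lemma finrank_eq_one_of_isCompl_ker {f : Dual K V} (hf : f ≠ 0) {U : Submodule K V}
    (hU : IsCompl (ker f) U) : finrank K U = 1 :=
  isAtom_iff_finrank_eq_one.1 <| hU.isCoatom_iff_isAtom.1 <|
    LinearMap.isCoatom_ker_of_surjective (LinearMap.surjective hf)

namespace LinearMap.BilinForm

section Similitude

variable {B : BilinForm K V} {f : Module.End K V} {m : K}
  (hf : ∀ v w, B (f v) (f w) = m * B v w)
include hf

lemma mul_apply_map_of_apply_eq_smul {e : V} {c : K} (he : f e = c • e) (v : V) :
    c * B e (f v) = m * B e v := by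
  rw [← hf, he, map_smul, smul_apply, smul_eq_mul]

lemma map_mem_ker_of_apply_eq_smul {e : V} {c : K} (he : f e = c • e) (hc : c ≠ 0) {v : V}
    (hv : v ∈ ker (B e)) : f v ∈ ker (B e) := by
  have := mul_apply_map_of_apply_eq_smul hf he v
  rw [mem_ker.1 hv, mul_zero] at this
  exact mem_ker.2 ((mul_eq_zero.1 this).resolve_left hc)

lemma apply_eq_inv_mul_smul_of_apply_ne_zero {e e' : V} {c : K} (he : f e = c • e)
    (hc : c ≠ 0) (he' : f e' ∈ K ∙ e') (hee' : B e e' ≠ 0) : f e' = (c⁻¹ * m) • e' := by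
  obtain ⟨d, hd⟩ := mem_span_singleton.1 he'
  have := mul_apply_map_of_apply_eq_smul hf he e'
  rw [← hd, map_smul, smul_eq_mul, ← mul_assoc] at this
  rw [← hd, (eq_inv_mul_iff_mul_eq₀ hc).2 (mul_right_cancel₀ hee' this)]

end Similitude

section Alternating

variable {B : BilinForm K V} (hB : B.IsAlt) {x y : V} (hxy : B x y ≠ 0)
include hB hxy

lemma linearIndependent_pair_of_apply_ne_zero : LinearIndependent K ![x, y] := by
  refine LinearIndependent.pair_iff.2 fun a b hab => ?_
  have hx : B x (a • x + b • y) = B x 0 := by rw [hab]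
  have hy : B (a • x + b • y) y = B 0 y := by rw [hab]
  simp only [map_add, map_smul, LinearMap.add_apply, LinearMap.smul_apply, smul_eq_mul,
    hB.self_eq_zero, map_zero, LinearMap.zero_apply, mul_zero, zero_add, add_zero] at hx hy
  exact ⟨(mul_eq_zero.1 hy).resolve_right hxy, (mul_eq_zero.1 hx).resolve_right hxy⟩

lemma finrank_sup_span_singleton_of_apply_ne_zero : finrank K ↥((K ∙ x) ⊔ (K ∙ y)) = 2 := by
  rw [← span_range_pair]
  simpa using finrank_span_eq_card (linearIndependent_pair_of_apply_ne_zero hB hxy)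

lemma eq_zero_of_mem_sup_span_singleton {v : V} (hv : v ∈ (K ∙ x) ⊔ (K ∙ y))
    (h : ∀ w ∈ (K ∙ x) ⊔ (K ∙ y), B v w = 0) : v = 0 := by
  obtain ⟨_, ha, _, hb, rfl⟩ := mem_sup.1 hv
  obtain ⟨a, rfl⟩ := mem_span_singleton.1 ha
  obtain ⟨b, rfl⟩ := mem_span_singleton.1 hb
  have hx := h x (mem_sup_left (mem_span_singleton_self x))
  have hy := h y (mem_sup_right (mem_span_singleton_self y))
  simp only [map_add, map_smul, LinearMap.add_apply, LinearMap.smul_apply, smul_eq_mul,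
    hB.self_eq_zero, ← hB.neg_eq x y, mul_zero, zero_add, add_zero, mul_neg, neg_eq_zero] at hx hy
  rw [(mul_eq_zero.1 hy).resolve_right hxy, (mul_eq_zero.1 hx).resolve_right hxy,
    zero_smul, zero_smul, add_zero]

end Alternating

end LinearMap.BilinForm

end

theorem isotropic_line_gives_endoscopic_general
    {G V : Type*} [Group G] [AddCommGroup V] [Module ℂ V]
    (B : LinearMap.BilinForm ℂ V)
    (hBalt : ∀ v, B v v = 0) (hBnd : B.Nondegenerate)
    (φ : Representation ℂ G V) (μ χ : G →* ℂˣ)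
    (hss : ∀ W : Submodule ℂ V, (∀ g : G, ∀ v ∈ W, φ g v ∈ W) →
      ∃ U : Submodule ℂ V, (∀ g : G, ∀ v ∈ U, φ g v ∈ U) ∧ IsCompl W U)
    (heq : ∀ g v w, B (φ g v) (φ g w) = (μ g : ℂ) * B v w)
    (L : Submodule ℂ V) (hL : Module.finrank ℂ L = 1)
    (hLchi : ∀ g : G, ∀ v ∈ L, φ g v = (χ g : ℂ) • v) :
    ∃ L' : Submodule ℂ V, Module.finrank ℂ L' = 1 ∧
      (∃ v ∈ L, ∃ v' ∈ L', B v v' ≠ 0) ∧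
      (∀ g : G, ∀ v ∈ L', φ g v = ((χ g : ℂ)⁻¹ * (μ g : ℂ)) • v) ∧
      Module.finrank ℂ (L ⊔ L' : Submodule ℂ V) = 2 ∧
      (∀ v ∈ (L ⊔ L' : Submodule ℂ V), (∀ w ∈ (L ⊔ L' : Submodule ℂ V), B v w = 0) → v = 0) ∧
      ∃ h : ∀ g : G, ∀ v ∈ (L ⊔ L' : Submodule ℂ V), φ g v ∈ (L ⊔ L' : Submodule ℂ V),
        ∀ g : G, LinearMap.det ((φ g).restrict (h g)) = (μ g : ℂ) := by
  open LinearMap Submodule LinearMap.BilinForm Module.End in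
  obtain ⟨e, he0, rfl⟩ := exists_ne_zero_eq_span_singleton_of_finrank_eq_one hL
  have hχe g : φ g e = (χ g : ℂ) • e := hLchi g e (mem_span_singleton_self e)
  have hBe : B e ≠ 0 := fun h => he0 (hBnd.1 e fun w => by rw [h, LinearMap.zero_apply])
  obtain ⟨U, hUinv, hU⟩ := hss (ker (B e)) fun g _ =>
    map_mem_ker_of_apply_eq_smul (heq g) (hχe g) (χ g).ne_zero
  have hU1 := finrank_eq_one_of_isCompl_ker hBe hU
  obtain ⟨e', he'0, rfl⟩ := exists_ne_zero_eq_span_singleton_of_finrank_eq_one hU1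
  have hee' : B e e' ≠ 0 := fun h => he'0 (hU.disjoint.le_bot ⟨h, mem_span_singleton_self e'⟩)
  have hχe' g : φ g e' = ((χ g : ℂ)⁻¹ * μ g) • e' :=
    apply_eq_inv_mul_smul_of_apply_ne_zero (heq g) (hχe g) (χ g).ne_zero
      (hUinv g e' (mem_span_singleton_self e')) hee'
  refine ⟨_, hU1, ⟨e, mem_span_singleton_self e, e', mem_span_singleton_self e', hee'⟩,
    fun g _ => apply_eq_smul_of_mem_span_singleton (hχe' g),
    finrank_sup_span_singleton_of_apply_ne_zero hBalt hee',
    fun _ => eq_zero_of_mem_sup_span_singleton hBalt hee',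
    fun g => mapsTo_sup_span_singleton (hχe g) (hχe' g), fun g => ?_⟩
  rw [det_restrict_sup_span_singleton (linearIndependent_pair_of_apply_ne_zero hBalt hee') (hχe g)
    (hχe' g), mul_inv_cancel_left₀ (χ g).ne_zero]

/-- If a semisimple `(G,μ)`-symplectic representation on a 4-dimensional space stabilizes
an isotropic line `L` affording the character `χ`, then it stabilizes another line `L'`
pairing nontrivially with `L`, affording `χ⁻¹·μ`, and `L ⊔ L'` is a nondegenerate
invariant 2-dimensional subrepresentation with determinant `μ`. -/
theorem isotropic_line_gives_endoscopic
    {G V : Type*} [Group G] [AddCommGroup V] [Module ℂ V] [FiniteDimensional ℂ V]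
    (B : LinearMap.BilinForm ℂ V)
    (hBalt : ∀ v, B v v = 0) (hBnd : B.Nondegenerate)
    (hdim : Module.finrank ℂ V = 4)
    (φ : Representation ℂ G V) (μ χ : G →* ℂˣ)
    (hss : ∀ W : Submodule ℂ V, (∀ g : G, ∀ v ∈ W, φ g v ∈ W) →
      ∃ U : Submodule ℂ V, (∀ g : G, ∀ v ∈ U, φ g v ∈ U) ∧ IsCompl W U)
    (heq : ∀ g v w, B (φ g v) (φ g w) = (μ g : ℂ) * B v w)
    (L : Submodule ℂ V) (hL : Module.finrank ℂ L = 1)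
    (hLiso : ∀ v ∈ L, ∀ w ∈ L, B v w = 0)
    (hLchi : ∀ g : G, ∀ v ∈ L, φ g v = (χ g : ℂ) • v) :
    ∃ L' : Submodule ℂ V, Module.finrank ℂ L' = 1 ∧
      (∃ v ∈ L, ∃ v' ∈ L', B v v' ≠ 0) ∧
      (∀ g : G, ∀ v ∈ L', φ g v = ((χ g : ℂ)⁻¹ * (μ g : ℂ)) • v) ∧
      Module.finrank ℂ (L ⊔ L' : Submodule ℂ V) = 2 ∧
      (∀ v ∈ (L ⊔ L' : Submodule ℂ V), (∀ w ∈ (L ⊔ L' : Submodule ℂ V), B v w = 0) → v = 0) ∧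
      ∃ h : ∀ g : G, ∀ v ∈ (L ⊔ L' : Submodule ℂ V), φ g v ∈ (L ⊔ L' : Submodule ℂ V),
        ∀ g : G, LinearMap.det ((φ g).restrict (h g)) = (μ g : ℂ) :=
  isotropic_line_gives_endoscopic_general B hBalt hBnd φ μ χ hss heq L hL hLchi
end

section
/- Let V be a 4-dimensional complex symplectic space, G a group, μ: G → ℂ× a character, and φ: G → GL(V) a semisimple representation preserving the symplectic form up to μ. Suppose φ stabilizes a 2-dimensional isotropic subspace but no line. Then V ≅ W ⊕ (W∨ ⊗ μ) as G-representations, where W is an irreducible 2-dimensional representation; in particular φ ≅ ρ ⊕ (ρ ⊗ χ) where ρ = W and χ = μ·(det ρ)⁻¹. -/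
/-!
The invariant plane `P` is Lagrangian: it is isotropic of half the dimension, so `P^⊥ = P`.
Hence for an invariant complement `U` the form `B` identifies `U` with `P∨`, and since `φ`
scales `B` by `μ`, this identification carries the action on `U` to `μ ⊗ P∨`. As `P` contains
no invariant line it is irreducible. Finally, on a plane the determinant form
`(x, y) ↦ det [x y]` satisfies `ω(f x, f y) = det f · ω(x, y)`, so it identifies the
contragredient `P∨` with `P ⊗ det⁻¹`.
-/

open Module

namespace Module.Basis

variable {K M : Type*} [Field K] [AddCommGroup M] [Module K M] (b : Basis (Fin 2) K M)

lemma det_fin_two_apply (x y : M) :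
    b.det ![x, y] = b.repr x 0 * b.repr y 1 - b.repr x 1 * b.repr y 0 := by
  simp [det_apply, Matrix.det_fin_two, toMatrix_apply, mul_comm]

noncomputable def detForm : M →ₗ[K] Dual K M :=
  LinearMap.mk₂ K (fun x y => b.det ![x, y])
    (fun x x' y => by simp only [det_fin_two_apply, map_add, Finsupp.add_apply]; ring)
    (fun c x y => by simp only [det_fin_two_apply, map_smul, Finsupp.smul_apply, smul_eq_mul]; ring)
    (fun x y y' => by simp only [det_fin_two_apply, map_add, Finsupp.add_apply]; ring)
    (fun c x y => by simp only [det_fin_two_apply, map_smul, Finsupp.smul_apply, smul_eq_mul]; ring)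

lemma detForm_apply (x y : M) : b.detForm x y = b.det ![x, y] := rfl

lemma detForm_map (f : M →ₗ[K] M) (x y : M) :
    b.detForm (f x) (f y) = LinearMap.det f * b.detForm x y := by
  rw [detForm_apply, detForm_apply, ← det_comp]
  congr 1
  ext i; fin_cases i <;> rfl

lemma detForm_injective : Function.Injective b.detForm := by
  refine (injective_iff_map_eq_zero _).mpr fun x hx => b.repr.injective ?_
  have h (i : Fin 2) : b.detForm x (b i) = 0 := by rw [hx, LinearMap.zero_apply]
  ext i
  fin_cases i
  · simpa [detForm_apply, det_fin_two_apply] using h 1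
  · simpa [detForm_apply, det_fin_two_apply] using h 0

noncomputable def detFormEquiv : M ≃ₗ[K] Dual K M :=
  haveI := Module.Finite.of_basis b
  b.detForm.linearEquivOfInjective b.detForm_injective Subspace.dual_finrank_eq.symm

lemma detFormEquiv_apply (x : M) : b.detFormEquiv x = b.detForm x := rfl

lemma detFormEquiv_symm_dualMap {f g : M →ₗ[K] M} (hfg : f ∘ₗ g = LinearMap.id)
    (ξ : Dual K M) :
    b.detFormEquiv.symm (g.dualMap ξ) = (LinearMap.det f)⁻¹ • f (b.detFormEquiv.symm ξ) := by
  have hdet : LinearMap.det f * LinearMap.det g = 1 := by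
    rw [← LinearMap.det_comp, hfg, LinearMap.det_id]
  have hfg' (x : M) : f (g x) = x := LinearMap.congr_fun hfg x
  obtain ⟨w, rfl⟩ := b.detFormEquiv.surjective ξ
  rw [LinearEquiv.symm_apply_eq, LinearEquiv.symm_apply_apply]
  ext x
  rw [LinearMap.dualMap_apply, map_smul, LinearMap.smul_apply, detFormEquiv_apply,
    detFormEquiv_apply, ← hfg' x, detForm_map, hfg', smul_eq_mul, ← mul_assoc,
    inv_mul_cancel₀ (left_ne_zero_of_mul_eq_one hdet), one_mul]

end Module.Basis

namespace LinearMap.BilinForm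

variable {K V : Type*} [Field K] [AddCommGroup V] [Module K V]
  {B : LinearMap.BilinForm K V}

lemma orthogonal_eq_self_of_isotropic [FiniteDimensional K V] (hB : B.Nondegenerate)
    {P : Submodule K V} (hiso : ∀ v ∈ P, ∀ w ∈ P, B v w = 0)
    (hP : 2 * finrank K P = finrank K V) :
    B.orthogonal P = P := by
  have hle : P ≤ B.orthogonal P := fun x hx =>
    (mem_orthogonal_iff).mpr fun n hn => hiso n hn x hx
  refine (Submodule.eq_of_le_of_finrank_le hle ?_).symm
  rw [finrank_orthogonal hB]
  omega

variable (B) in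
def pairingDual (P U : Submodule K V) : U →ₗ[K] Dual K P :=
  P.subtype.dualMap ∘ₗ B.flip ∘ₗ U.subtype

lemma pairingDual_injective {P U : Submodule K V} (hPP : B.orthogonal P = P)
    (hPU : IsCompl P U) : Function.Injective (B.pairingDual P U) := by
  refine (injective_iff_map_eq_zero _).mpr fun u hu => Subtype.ext ?_
  have hmem : (u : V) ∈ B.orthogonal P :=
    (mem_orthogonal_iff).mpr fun p hp => LinearMap.congr_fun hu ⟨p, hp⟩
  exact Submodule.disjoint_def.mp hPU.disjoint u (hPP ▸ hmem) u.2

variable [FiniteDimensional K V] {P U : Submodule K V}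

lemma finrank_compl_eq_of_orthogonal_eq_self (hB : B.Nondegenerate) (hPP : B.orthogonal P = P)
    (hPU : IsCompl P U) : finrank K U = finrank K P := by
  have hsum := Submodule.finrank_add_eq_of_isCompl hPU
  have horth := finrank_orthogonal hB P
  rw [hPP] at horth
  omega

noncomputable def lagrangianSplitting (hB : B.Nondegenerate) (hPP : B.orthogonal P = P)
    (hPU : IsCompl P U) : V ≃ₗ[K] P × Dual K P :=
  (Submodule.prodEquivOfIsCompl P U hPU).symm.trans <| (LinearEquiv.refl K P).prodCongr <|
    (B.pairingDual P U).linearEquivOfInjective (pairingDual_injective hPP hPU)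
      ((finrank_compl_eq_of_orthogonal_eq_self hB hPP hPU).trans Subspace.dual_finrank_eq.symm)

lemma lagrangianSplitting_add (hB : B.Nondegenerate) (hPP : B.orthogonal P = P)
    (hPU : IsCompl P U) (p : P) (u : U) :
    lagrangianSplitting hB hPP hPU (p + u) = (p, B.pairingDual P U u) := by
  rw [lagrangianSplitting, LinearEquiv.trans_apply,
    ← Submodule.coe_prodEquivOfIsCompl' P U hPU (p, u),
    LinearEquiv.symm_apply_apply]
  rfl

lemma lagrangianSplitting_map {G : Type*} [Group G] (hB : B.Nondegenerate)
    (hPP : B.orthogonal P = P) (hPU : IsCompl P U) (φ : Representation K G V) (μ : G → K)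
    (hP : ∀ g : G, ∀ v ∈ P, φ g v ∈ P) (hU : ∀ g : G, ∀ v ∈ U, φ g v ∈ U)
    (heq : ∀ g v w, B (φ g v) (φ g w) = μ g * B v w) (g : G) (v : V) :
    lagrangianSplitting hB hPP hPU (φ g v) =
      ((φ g).restrict (hP g) (lagrangianSplitting hB hPP hPU v).1,
        μ g • ((φ g⁻¹).restrict (hP g⁻¹)).dualMap
          (lagrangianSplitting hB hPP hPU v).2) := by
  obtain ⟨⟨p, u⟩, rfl⟩ := (Submodule.prodEquivOfIsCompl P U hPU).surjective v
  rw [Submodule.coe_prodEquivOfIsCompl', map_add]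
  change lagrangianSplitting hB hPP hPU ((φ g).restrict (hP g) p + (φ g).restrict (hU g) u) = _
  rw [lagrangianSplitting_add, lagrangianSplitting_add]
  refine Prod.ext rfl (LinearMap.ext fun w => ?_)
  change B w (φ g u) = μ g * B (φ g⁻¹ w) u
  rw [← heq, Representation.self_inv_apply]

end LinearMap.BilinForm

lemma Submodule.eq_bot_or_eq_of_le_of_finrank_ne_one {K V : Type*} [Field K] [AddCommGroup V]
    [Module K V] [FiniteDimensional K V] {P U : Submodule K V} (hP : finrank K P = 2)
    (hUP : U ≤ P) (hU : finrank K U ≠ 1) : U = ⊥ ∨ U = P := by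
  have hle : finrank K U ≤ 2 := hP ▸ Submodule.finrank_mono hUP
  obtain h | h : finrank K U = 0 ∨ finrank K U = 2 := by omega
  · exact Or.inl (Submodule.finrank_eq_zero.mp h)
  · exact Or.inr (Submodule.eq_of_le_of_finrank_le hUP (by rw [h, hP]))

theorem isotropic_plane_parameter_structure_general
    {G V : Type*} [Group G] [AddCommGroup V] [Module ℂ V]
    (B : LinearMap.BilinForm ℂ V)
    (hBnd : B.Nondegenerate)
    (hdim : Module.finrank ℂ V = 4)
    (φ : Representation ℂ G V) (μ : G →* ℂˣ)
    (hss : ∀ W : Submodule ℂ V, (∀ g : G, ∀ v ∈ W, φ g v ∈ W) →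
      ∃ U : Submodule ℂ V, (∀ g : G, ∀ v ∈ U, φ g v ∈ U) ∧ IsCompl W U)
    (heq : ∀ g v w, B (φ g v) (φ g w) = (μ g : ℂ) * B v w)
    (hplane : ∃ P : Submodule ℂ V, Module.finrank ℂ P = 2 ∧
      (∀ v ∈ P, ∀ w ∈ P, B v w = 0) ∧ (∀ g : G, ∀ v ∈ P, φ g v ∈ P))
    (hnoline : ¬ ∃ L : Submodule ℂ V, Module.finrank ℂ L = 1 ∧
      (∀ g : G, ∀ v ∈ L, φ g v ∈ L)) :
    ∃ (W : Submodule ℂ V) (hW : ∀ g : G, ∀ v ∈ W, φ g v ∈ W),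
      Module.finrank ℂ W = 2 ∧
      (∀ U : Submodule ℂ V, U ≤ W → (∀ g : G, ∀ v ∈ U, φ g v ∈ U) → U = ⊥ ∨ U = W) ∧
      -- V ≅ W ⊕ (W∨ ⊗ μ) as G-representations
      (∃ e : V ≃ₗ[ℂ] (W × Module.Dual ℂ W), ∀ (g : G) (v : V),
        e (φ g v) = ((φ g).restrict (hW g) (e v).1,
          (μ g : ℂ) • ((φ g⁻¹).restrict (hW g⁻¹)).dualMap (e v).2)) ∧
      -- in particular φ ≅ ρ ⊕ (ρ ⊗ χ) with χ = μ·(det ρ)⁻¹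
      (∃ e₂ : V ≃ₗ[ℂ] (W × W), ∀ (g : G) (v : V),
        e₂ (φ g v) = ((φ g).restrict (hW g) (e₂ v).1,
          ((μ g : ℂ) / LinearMap.det ((φ g).restrict (hW g))) •
            (φ g).restrict (hW g) (e₂ v).2)) := by
  have : FiniteDimensional ℂ V := Module.finite_of_finrank_eq_succ hdim
  obtain ⟨P, hP2, hPiso, hPinv⟩ := hplane
  obtain ⟨U, hUinv, hPU⟩ := hss P hPinv
  have hPP : B.orthogonal P = P := B.orthogonal_eq_self_of_isotropic hBnd hPiso (by omega)
  have he := B.lagrangianSplitting_map hBnd hPP hPU φ (fun g => (μ g : ℂ)) hPinv hUinv heq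
  set e := B.lagrangianSplitting hBnd hPP hPU
  let j := (Module.finBasisOfFinrankEq ℂ P hP2).detFormEquiv
  refine ⟨P, hPinv, hP2,
    fun L hLP hL => Submodule.eq_bot_or_eq_of_le_of_finrank_ne_one hP2 hLP fun h1 =>
      hnoline ⟨L, h1, hL⟩,
    ⟨e, he⟩, ⟨e.trans ((LinearEquiv.refl ℂ P).prodCongr j.symm), fun g v => ?_⟩⟩
  have hinv : (φ g).restrict (hPinv g) ∘ₗ (φ g⁻¹).restrict (hPinv g⁻¹) = LinearMap.id :=
    LinearMap.ext fun p => Subtype.ext (φ.self_inv_apply g p)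
  simp only [LinearEquiv.trans_apply, LinearEquiv.prodCongr_apply, LinearEquiv.refl_apply, he,
    map_smul, Module.Basis.detFormEquiv_symm_dualMap _ hinv, smul_smul, div_eq_mul_inv, j]

/-- A semisimple `(G,μ)`-symplectic representation on a 4-dimensional space stabilizing a
2-dimensional isotropic subspace but no line is of the form `W ⊕ (W∨ ⊗ μ)` for an
irreducible 2-dimensional `W`; equivalently `φ ≅ ρ ⊕ (ρ ⊗ χ)` with `χ = μ·(det ρ)⁻¹`. -/
theorem isotropic_plane_parameter_structure
    {G V : Type*} [Group G] [AddCommGroup V] [Module ℂ V] [FiniteDimensional ℂ V]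
    (B : LinearMap.BilinForm ℂ V)
    (hBalt : ∀ v, B v v = 0) (hBnd : B.Nondegenerate)
    (hdim : Module.finrank ℂ V = 4)
    (φ : Representation ℂ G V) (μ : G →* ℂˣ)
    (hss : ∀ W : Submodule ℂ V, (∀ g : G, ∀ v ∈ W, φ g v ∈ W) →
      ∃ U : Submodule ℂ V, (∀ g : G, ∀ v ∈ U, φ g v ∈ U) ∧ IsCompl W U)
    (heq : ∀ g v w, B (φ g v) (φ g w) = (μ g : ℂ) * B v w)
    (hplane : ∃ P : Submodule ℂ V, Module.finrank ℂ P = 2 ∧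
      (∀ v ∈ P, ∀ w ∈ P, B v w = 0) ∧ (∀ g : G, ∀ v ∈ P, φ g v ∈ P))
    (hnoline : ¬ ∃ L : Submodule ℂ V, Module.finrank ℂ L = 1 ∧
      (∀ g : G, ∀ v ∈ L, φ g v ∈ L)) :
    ∃ (W : Submodule ℂ V) (hW : ∀ g : G, ∀ v ∈ W, φ g v ∈ W),
      Module.finrank ℂ W = 2 ∧
      (∀ U : Submodule ℂ V, U ≤ W → (∀ g : G, ∀ v ∈ U, φ g v ∈ U) → U = ⊥ ∨ U = W) ∧
      -- V ≅ W ⊕ (W∨ ⊗ μ) as G-representations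
      (∃ e : V ≃ₗ[ℂ] (W × Module.Dual ℂ W), ∀ (g : G) (v : V),
        e (φ g v) = ((φ g).restrict (hW g) (e v).1,
          (μ g : ℂ) • ((φ g⁻¹).restrict (hW g⁻¹)).dualMap (e v).2)) ∧
      -- in particular φ ≅ ρ ⊕ (ρ ⊗ χ) with χ = μ·(det ρ)⁻¹
      (∃ e₂ : V ≃ₗ[ℂ] (W × W), ∀ (g : G) (v : V),
        e₂ (φ g v) = ((φ g).restrict (hW g) (e₂ v).1,
          ((μ g : ℂ) / LinearMap.det ((φ g).restrict (hW g))) •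
            (φ g).restrict (hW g) (e₂ v).2)) :=
  isotropic_plane_parameter_structure_general B hBnd hdim φ μ hss heq hplane hnoline
end

section
/- Let D be a quaternion algebra over a field F of characteristic 0, with reduced norm N and conjugation x ↦ x̄. For (α,β) ∈ D× × D×, the F-linear map ρ(α,β): D → D given by x ↦ α x β̄ satisfies N(ρ(α,β)(x)) = N(α)N(β)·N(x), and the kernel of the resulting homomorphism D× × D× → GO(D, N) is {(z, z⁻¹) : z ∈ F×}. -/
/-!
`x x̄ = N(x)` is a central scalar, so `N(xy) = x (y ȳ) x̄ = N(x) N(y)` and `N(x̄) = N(x)`; this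
gives the similitude factor. If `α x β̄ = x` for all `x`, then `x = 1` gives `β̄ = α⁻¹`, so `α`
is central; commuting with `i` and `j` kills the imaginary part of `α` once `2 ≠ 0` and `i² ≠ 0`,
hence `α = z ∈ F×` and `β = z⁻¹`.
-/

open Quaternion

/-- The reduced norm on a quaternion algebra `D` over a field `F` of characteristic 0:
`N x = (x * x̄).re`. -/
noncomputable def quatNorm {F : Type*} [Field F] (c₁ c₂ : F)
    (x : QuaternionAlgebra F c₁ 0 c₂) : F := (x * star x).re

section quatNorm

variable {F : Type*} [Field F] {c₁ c₂ : F}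

theorem mul_star_eq_coe_quatNorm (x : ℍ[F,c₁,0,c₂]) : x * star x = ↑(quatNorm c₁ c₂ x) :=
  QuaternionAlgebra.mul_star_eq_coe x

theorem quatNorm_mul (x y : ℍ[F,c₁,0,c₂]) :
    quatNorm c₁ c₂ (x * y) = quatNorm c₁ c₂ x * quatNorm c₁ c₂ y := by
  apply QuaternionAlgebra.coe_injective (c₁ := c₁) (c₂ := 0) (c₃ := c₂)
  calc ((quatNorm c₁ c₂ (x * y) : F) : ℍ[F,c₁,0,c₂])
      = x * (y * star y) * star x := by
        rw [← mul_star_eq_coe_quatNorm, star_mul, mul_assoc, mul_assoc, mul_assoc]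
    _ = ↑(quatNorm c₁ c₂ y) * (x * star x) := by
        rw [mul_star_eq_coe_quatNorm y, ← QuaternionAlgebra.coe_commutes, mul_assoc]
    _ = ↑(quatNorm c₁ c₂ x * quatNorm c₁ c₂ y) := by
        rw [mul_star_eq_coe_quatNorm, ← QuaternionAlgebra.coe_mul, mul_comm]

theorem quatNorm_star (x : ℍ[F,c₁,0,c₂]) : quatNorm c₁ c₂ (star x) = quatNorm c₁ c₂ x := by
  rw [quatNorm, star_star, star_comm_self', quatNorm]

end quatNorm

namespace QuaternionAlgebra

variable {F : Type*} [Field F] {c₁ c₂ : F}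

theorem eq_coe_re_of_forall_commute [NeZero (2 : F)] (hc₁ : c₁ ≠ 0) {a : ℍ[F,c₁,0,c₂]}
    (h : ∀ x, a * x = x * a) : a = ↑a.re := by
  have hi := congrArg (fun q => (q.imJ, q.imK)) (h ⟨0, 1, 0, 0⟩)
  have hj := congrArg imK (h ⟨0, 0, 1, 0⟩)
  simp only [imJ_mul, imK_mul, mul_zero, zero_mul, mul_one, one_mul, add_zero, zero_add,
    sub_zero, zero_sub, Prod.mk.injEq] at hi hj
  rw [neg_eq_iff_add_eq_zero, neg_eq_iff_add_eq_zero, ← two_mul, ← two_mul] at hi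
  rw [eq_neg_iff_add_eq_zero, ← two_mul] at hj
  simp [hc₁, two_ne_zero] at hi hj
  ext <;> simp [hi, hj]

theorem coe_mul_mul_star_coe_inv {z : F} (hz : z ≠ 0) (x : ℍ[F,c₁,0,c₂]) :
    ↑z * x * star (↑z⁻¹ : ℍ[F,c₁,0,c₂]) = x := by
  rw [star_coe, mul_assoc, coe_commutes, mul_assoc, ← coe_mul, inv_mul_cancel₀ hz, coe_one,
    mul_one]

theorem exists_eq_coe_of_forall_mul_mul_star_eq_self [NeZero (2 : F)] (hc₁ : c₁ ≠ 0)
    {α β : ℍ[F,c₁,0,c₂]ˣ} (h : ∀ x, ↑α * x * star (β : ℍ[F,c₁,0,c₂]) = x) :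
    ∃ z : Fˣ, (α : ℍ[F,c₁,0,c₂]) = ↑(z : F) ∧ (β : ℍ[F,c₁,0,c₂]) = ↑((z⁻¹ : Fˣ) : F) := by
  have hinv : ↑α⁻¹ = star (β : ℍ[F,c₁,0,c₂]) :=
    Units.inv_eq_of_mul_eq_one_right (by simpa using h 1)
  have hcomm : ∀ x, (α : ℍ[F,c₁,0,c₂]) * x = x * α := fun x => by
    conv_rhs => rw [← h x, ← hinv, Units.inv_mul_cancel_right]
  obtain ⟨a, hα⟩ : ∃ a : F, (α : ℍ[F,c₁,0,c₂]) = ↑a :=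
    ⟨_, eq_coe_re_of_forall_commute hc₁ hcomm⟩
  have ha : a ≠ 0 := fun h0 => α.ne_zero (by rw [hα, h0, coe_zero])
  refine ⟨Units.mk0 a ha, hα, ?_⟩
  have hαinv : ↑α⁻¹ = (↑a⁻¹ : ℍ[F,c₁,0,c₂]) := by
    refine Units.inv_eq_of_mul_eq_one_right ?_
    rw [hα, ← coe_mul, mul_inv_cancel₀ ha, coe_one]
  rw [← star_star (β : ℍ[F,c₁,0,c₂]), ← hinv, hαinv, star_coe]
  rfl

end QuaternionAlgebra

theorem quaternion_similitude_action_general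
    {F : Type*} [Field F] [CharZero F] (c₁ c₂ : F) (hc₁ : c₁ ≠ 0) :
    (∀ (α β : (QuaternionAlgebra F c₁ 0 c₂)ˣ) (x : QuaternionAlgebra F c₁ 0 c₂),
      quatNorm c₁ c₂ ((α : QuaternionAlgebra F c₁ 0 c₂) * x * star (β : QuaternionAlgebra F c₁ 0 c₂))
        = quatNorm c₁ c₂ (α : QuaternionAlgebra F c₁ 0 c₂) *
          quatNorm c₁ c₂ (β : QuaternionAlgebra F c₁ 0 c₂) * quatNorm c₁ c₂ x) ∧
    (∀ α β : (QuaternionAlgebra F c₁ 0 c₂)ˣ,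
      (∀ x : QuaternionAlgebra F c₁ 0 c₂,
        (α : QuaternionAlgebra F c₁ 0 c₂) * x * star (β : QuaternionAlgebra F c₁ 0 c₂) = x)
      ↔ ∃ z : Fˣ, (α : QuaternionAlgebra F c₁ 0 c₂) = algebraMap F (QuaternionAlgebra F c₁ 0 c₂) z ∧
          (β : QuaternionAlgebra F c₁ 0 c₂)
            = algebraMap F (QuaternionAlgebra F c₁ 0 c₂) ((z⁻¹ : Fˣ) : F)) := by
  refine ⟨fun α β x => ?_, fun α β => ?_⟩
  · rw [quatNorm_mul, quatNorm_mul, quatNorm_star, mul_right_comm]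
  · simp only [QuaternionAlgebra.coe_algebraMap]
    refine ⟨QuaternionAlgebra.exists_eq_coe_of_forall_mul_mul_star_eq_self hc₁, ?_⟩
    rintro ⟨z, hα, hβ⟩ x
    rw [hα, hβ, Units.val_inv_eq_inv_val]
    exact QuaternionAlgebra.coe_mul_mul_star_coe_inv z.ne_zero x

/-- For `(α, β) ∈ D× × D×`, the map `ρ(α,β) : x ↦ α x β̄` on a quaternion algebra `D`
satisfies `N(ρ(α,β)(x)) = N(α)N(β)N(x)`, and the kernel of the resulting homomorphism
`D× × D× → GO(D, N)` is `{(z, z⁻¹) : z ∈ F×}`. -/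
theorem quaternion_similitude_action
    {F : Type*} [Field F] [CharZero F] (c₁ c₂ : F) (hc₁ : c₁ ≠ 0) (hc₂ : c₂ ≠ 0) :
    (∀ (α β : (QuaternionAlgebra F c₁ 0 c₂)ˣ) (x : QuaternionAlgebra F c₁ 0 c₂),
      quatNorm c₁ c₂ ((α : QuaternionAlgebra F c₁ 0 c₂) * x * star (β : QuaternionAlgebra F c₁ 0 c₂))
        = quatNorm c₁ c₂ (α : QuaternionAlgebra F c₁ 0 c₂) *
          quatNorm c₁ c₂ (β : QuaternionAlgebra F c₁ 0 c₂) * quatNorm c₁ c₂ x) ∧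
    (∀ α β : (QuaternionAlgebra F c₁ 0 c₂)ˣ,
      (∀ x : QuaternionAlgebra F c₁ 0 c₂,
        (α : QuaternionAlgebra F c₁ 0 c₂) * x * star (β : QuaternionAlgebra F c₁ 0 c₂) = x)
      ↔ ∃ z : Fˣ, (α : QuaternionAlgebra F c₁ 0 c₂) = algebraMap F (QuaternionAlgebra F c₁ 0 c₂) z ∧
          (β : QuaternionAlgebra F c₁ 0 c₂)
            = algebraMap F (QuaternionAlgebra F c₁ 0 c₂) ((z⁻¹ : Fˣ) : F)) :=
  quaternion_similitude_action_general c₁ c₂ hc₁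
end
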